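/- Let n ≥ 6 and let i be an integer with ⌊n/3⌋ + 2 ≤ i ≤ ⌊n/2⌋. Then the number of accurate dominating sets of the cycle C_n of cardinality i satisfies d_a(C_n, i) ≤ Σ_{k=3}^{i−1} n · d(P_{n−k−2}, i−k). -/

import Mathlib

/-- `D` is a dominating set of the simple graph `G`: every vertex not in `D`
is adjacent to at least one vertex in `D`. -/
def IsDomSet {V : Type*} (G : SimpleGraph V) (D : Finset V) : Prop :=
  ∀ v : V, v ∉ D → ∃ u ∈ D, G.Adj u v

/-- `D` is an accurate dominating set of `G`: a dominating set such that no subset of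
`V \ D` of cardinality `|D|` is a dominating set of `G`. -/
def IsAccDomSet {V : Type*} (G : SimpleGraph V) (D : Finset V) : Prop :=
  IsDomSet G D ∧
    ∀ E : Finset V, (∀ v ∈ E, v ∉ D) → E.card = D.card → ¬ IsDomSet G E

/-- The domination number of `G`: the minimum cardinality of a dominating set. -/
noncomputable def domNum {V : Type*} (G : SimpleGraph V) : ℕ :=
  sInf {k | ∃ D : Finset V, IsDomSet G D ∧ D.card = k}

/-- The accurate domination number of `G`: the minimum cardinality of an accurate
dominating set. -/
noncomputable def accDomNum {V : Type*} (G : SimpleGraph V) : ℕ :=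
  sInf {k | ∃ D : Finset V, IsAccDomSet G D ∧ D.card = k}

/-- `d(G,i)`: the number of dominating sets of `G` of cardinality `i`. -/
noncomputable def numDomSets {V : Type*} (G : SimpleGraph V) (i : ℕ) : ℕ :=
  Set.ncard {D : Finset V | IsDomSet G D ∧ D.card = i}

/-- `d_a(G,i)`: the number of accurate dominating sets of `G` of cardinality `i`. -/
noncomputable def numAccDomSets {V : Type*} (G : SimpleGraph V) (i : ℕ) : ℕ :=
  Set.ncard {D : Finset V | IsAccDomSet G D ∧ D.card = i}

/-!
An accurate dominating set `D` of `C_n` with `2|D| ≤ n` contains three consecutive vertices: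
otherwise moving every vertex of `D` to a neighbour outside `D` gives a dominating set disjoint
from `D` of size at most `|D|`, which can be padded to size `|D|` inside the complement. Hence `D`
contains a maximal run `s, …, s + k - 1` with `3 ≤ k < |D|`. As `s + k, s - 1 ∉ D`, the rest of `D`
dominates the path `s + k + 1, …, s - 2` on its own, so it is a dominating set of `P_{n-k-2}` of
size `|D| - k`, and `D` is determined by it together with `s` and `k`.
-/

open Finset SimpleGraph
open scoped Fin.NatCast Fin.CommRing

section General

variable {V : Type*} {G : SimpleGraph V}

theorem IsDomSet.mono {D E : Finset V} (hDE : D ⊆ E) (hD : IsDomSet G D) : IsDomSet G E :=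
  fun v hv => (hD v fun h => hv (hDE h)).imp fun _ ⟨hu, huv⟩ => ⟨hDE hu, huv⟩

theorem not_isAccDomSet_of_isDomSet_of_disjoint [Fintype V] {D E : Finset V}
    (hE : IsDomSet G E) (hED : Disjoint E D) (hcard : E.card ≤ D.card)
    (hD : 2 * D.card ≤ Fintype.card V) : ¬ IsAccDomSet G D := by
  classical
  rintro ⟨-, hacc⟩
  obtain ⟨F, hEF, hFD, hF⟩ := exists_subsuperset_card_eq (subset_compl_iff_disjoint_right.2 hED)
    hcard (by rw [card_compl]; omega)
  exact hacc F (fun v hv => mem_compl.1 (hFD hv)) hF (hE.mono hEF)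

theorem numDomSets_eq_card [Fintype V] [DecidablePred (IsDomSet G)] (i : ℕ) :
    numDomSets G i = #{D : Finset V | IsDomSet G D ∧ D.card = i} := by
  rw [numDomSets, ← coe_filter_univ, Set.ncard_coe_finset]

theorem numAccDomSets_eq_card [Fintype V] [DecidablePred (IsAccDomSet G)] (i : ℕ) :
    numAccDomSets G i = #{D : Finset V | IsAccDomSet G D ∧ D.card = i} := by
  rw [numAccDomSets, ← coe_filter_univ, Set.ncard_coe_finset]

end General

theorem Nat.exists_forall_le_and_not_succ {P : ℕ → Prop} (h0 : P 0) (h : ∃ m, ¬ P m) :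
    ∃ t, (∀ j ≤ t, P j) ∧ ¬ P (t + 1) := by
  classical
  have hpos : Nat.find h ≠ 0 := fun h' => Nat.find_spec h (h' ▸ h0)
  refine ⟨Nat.find h - 1, fun j hj => not_not.1 (Nat.find_min h (by omega)), ?_⟩
  rw [Nat.sub_add_cancel (Nat.one_le_iff_ne_zero.2 hpos)]
  exact Nat.find_spec h

namespace Fin

variable {n : ℕ} [NeZero n]

theorem natCast_eq_natCast_iff_of_lt {a b : ℕ} (ha : a < n) (hb : b < n) :
    (a : Fin n) = b ↔ a = b := by
  rw [Fin.ext_iff, val_natCast, val_natCast, Nat.mod_eq_of_lt ha, Nat.mod_eq_of_lt hb]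

theorem natCast_sub_one_eq_neg_one : ((n - 1 : ℕ) : Fin n) = -1 := by
  rw [eq_neg_iff_add_eq_zero, ← Nat.cast_add_one, Nat.sub_add_cancel NeZero.one_le, natCast_self]

end Fin

section Cycle

variable {n : ℕ} [NeZero n] {D : Finset (Fin n)}

theorem isDomSet_cycleGraph_iff (hn : 2 ≤ n) :
    IsDomSet (cycleGraph n) D ↔ ∀ v ∉ D, v - 1 ∈ D ∨ v + 1 ∈ D := by
  obtain ⟨m, rfl⟩ := Nat.exists_eq_add_of_le' hn
  refine forall₂_congr fun v _ => ?_
  have hadj (u : Fin (m + 2)) : (cycleGraph (m + 2)).Adj u v ↔ u = v - 1 ∨ u = v + 1 := by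
    rw [adj_comm, ← mem_neighborSet, cycleGraph_neighborSet]; rfl
  simp only [hadj, and_or_left, exists_or, exists_eq_right]

theorem exists_isDomSet_disjoint_of_no_three_consecutive (hn : 2 ≤ n)
    (hD : IsDomSet (cycleGraph n) D) (h3 : ∀ v, v - 1 ∈ D → v ∈ D → v + 1 ∉ D) :
    ∃ E, IsDomSet (cycleGraph n) E ∧ Disjoint E D ∧ E.card ≤ D.card := by
  classical
  rw [isDomSet_cycleGraph_iff hn] at hD
  -- Send each vertex of `D` to a neighbour outside `D`; since `D` has no three consecutive
  -- vertices and no gap of three, the images dominate the cycle.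
  let f (d : Fin n) : Fin n := if d + 1 ∈ D then d - 1 else d + 1
  have hf_nbr (d : Fin n) : f d = d - 1 ∨ f d = d + 1 := by unfold f; split_ifs <;> simp
  have hf_of_notMem {d : Fin n} (hd : d + 1 ∉ D) : f d = d + 1 := if_neg hd
  refine ⟨D.image f, (isDomSet_cycleGraph_iff hn).2 fun v hv => ?_, disjoint_left.2 ?_,
    card_image_le⟩
  · by_cases hvD : v ∈ D
    · obtain h | h := hf_nbr v <;> rw [← h] <;> simp [mem_image_of_mem f hvD]
    by_cases hv1 : v - 1 ∈ D
    · exact absurd (mem_image.2 ⟨v - 1, hv1, by rw [hf_of_notMem (by simpa)]; ring⟩) hv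
    have hv2 : v - 1 - 1 ∈ D := (hD _ hv1).resolve_right (by simpa)
    exact Or.inl (mem_image.2 ⟨v - 1 - 1, hv2, by rw [hf_of_notMem (by simpa)]; ring⟩)
  · intro x hx hxD
    obtain ⟨d, hd, rfl⟩ := mem_image.1 hx
    by_cases hd1 : d + 1 ∈ D
    · exact h3 d (by simpa [f, hd1] using hxD) hd hd1
    · simp [f, hd1] at hxD

theorem IsAccDomSet.exists_three_consecutive (hn : 2 ≤ n) (hD : IsAccDomSet (cycleGraph n) D)
    (hcard : 2 * D.card ≤ n) : ∃ v, v - 1 ∈ D ∧ v ∈ D ∧ v + 1 ∈ D := by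
  by_contra! h3
  obtain ⟨E, hE, hED, hEcard⟩ := exists_isDomSet_disjoint_of_no_three_consecutive hn hD.1 h3
  exact not_isAccDomSet_of_isDomSet_of_disjoint hE hED hEcard (by simpa using hcard) hD

def IsMaximalRun (D : Finset (Fin n)) (s : Fin n) (k : ℕ) : Prop :=
  s - 1 ∉ D ∧ (∀ j < k, s + (j : Fin n) ∈ D) ∧ s + (k : Fin n) ∉ D

theorem exists_isMaximalRun {v w : Fin n} (hv : v - 1 ∈ D ∧ v ∈ D ∧ v + 1 ∈ D) (hw : w ∉ D) :
    ∃ s k, 3 ≤ k ∧ IsMaximalRun D s k := by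
  obtain ⟨a, hback, ha⟩ := Nat.exists_forall_le_and_not_succ (P := fun j => v - (j : Fin n) ∈ D)
    (by simpa using hv.2.1) ⟨(v - w).val, by simpa using hw⟩
  obtain ⟨b, hfwd, hb⟩ := Nat.exists_forall_le_and_not_succ (P := fun j => v + (j : Fin n) ∈ D)
    (by simpa using hv.2.1) ⟨(w - v).val, by simpa using hw⟩
  have ha1 : a ≠ 0 := by rintro rfl; simp [hv.1] at ha
  have hb1 : b ≠ 0 := by rintro rfl; simp [hv.2.2] at hb
  refine ⟨v - a, a + b + 1, by omega, by simpa [sub_sub] using ha, fun j hj => ?_, ?_⟩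
  · rcases le_or_gt j a with hja | hja
    · convert hback (a - j) (by omega) using 1
      rw [Nat.cast_sub hja]; ring
    · convert hfwd (j - a) (by omega) using 1
      rw [Nat.cast_sub hja.le]; ring
  · convert hb using 2
    push_cast; ring

def arc (s : Fin n) (k : ℕ) : Finset (Fin n) :=
  (range k).image fun j : ℕ => s + (j : Fin n)

theorem add_natCast_mem_arc_iff {s : Fin n} {k t : ℕ} (ht : t < n) :
    s + (t : Fin n) ∈ arc s k ↔ t < k := by
  simp only [arc, mem_image, mem_range, add_right_inj]
  refine ⟨fun ⟨j, hj, hjt⟩ => ?_, fun h => ⟨t, h, rfl⟩⟩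
  have := congrArg Fin.val hjt
  rw [Fin.val_natCast, Fin.val_natCast, Nat.mod_eq_of_lt ht] at this
  exact this ▸ (Nat.mod_le j n).trans_lt hj

theorem card_arc (s : Fin n) {k : ℕ} (hk : k ≤ n) : (arc s k).card = k := by
  rw [arc, card_image_of_injOn, card_range]
  intro a ha b hb hab
  simp only [coe_range, Set.mem_Iio] at ha hb
  exact (Fin.natCast_eq_natCast_iff_of_lt (by omega) (by omega)).1 (add_left_cancel hab)

theorem arc_subset {s : Fin n} {k : ℕ} (h : ∀ j < k, s + (j : Fin n) ∈ D) : arc s k ⊆ D := by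
  intro x hx
  obtain ⟨j, hj, rfl⟩ := mem_image.1 hx
  exact h j (mem_range.1 hj)

theorem IsMaximalRun.lt_card {s : Fin n} {k : ℕ} (hD : IsDomSet (cycleGraph n) D)
    (hrun : IsMaximalRun D s k) (hk : 3 ≤ k) (hcard : 2 * D.card ≤ n) : k < D.card := by
  have hn := NeZero.pos n
  have hkD : k ≤ D.card := by
    by_contra! h
    have := card_le_card (arc_subset (s := s) (k := D.card + 1) fun j hj => hrun.2.1 j (by omega))
    rw [card_arc _ (by omega)] at this
    omega
  refine hkD.lt_of_ne fun hkD => ?_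
  have hDarc : arc s k = D :=
    eq_of_subset_of_card_le (arc_subset hrun.2.1) (by rw [card_arc _ (by omega)]; omega)
  have hout {t : ℕ} (ht : k ≤ t) (htn : t < n) : s + (t : Fin n) ∉ D := by
    rw [← hDarc, add_natCast_mem_arc_iff htn]; omega
  rcases (isDomSet_cycleGraph_iff (by omega)).1 hD _ (hout (t := k + 1) (by omega) (by omega))
    with h | h
  · exact hout le_rfl (by omega) (by convert h using 1; push_cast; ring)
  · exact hout (t := k + 2) (by omega) (by omega) (by convert h using 1; push_cast; ring)

def arcTail (s : Fin n) (k : ℕ) (j : Fin (n - k - 2)) : Fin n :=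
  s + ((k + 1 + j : ℕ) : Fin n)

/-- `S` sits on the path `s + k + 1, …, s - 2` left between the run and the two vertices `s + k`,
`s - 1` bounding it. -/
def arcWithTail (s : Fin n) (k : ℕ) (S : Finset (Fin (n - k - 2))) : Finset (Fin n) :=
  arc s k ∪ S.image (arcTail s k)

theorem arcTail_injective (s : Fin n) (k : ℕ) : Function.Injective (arcTail s k) := by
  intro a b hab
  have := (Fin.natCast_eq_natCast_iff_of_lt (by omega) (by omega)).1 (add_left_cancel hab)
  exact Fin.ext (by omega)

theorem arcTail_notMem_arc (s : Fin n) (k : ℕ) (j : Fin (n - k - 2)) :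
    arcTail s k j ∉ arc s k := by
  rw [arcTail, add_natCast_mem_arc_iff (by omega)]
  omega

theorem card_arcWithTail (s : Fin n) {k : ℕ} (hk : k ≤ n) (S : Finset (Fin (n - k - 2))) :
    (arcWithTail s k S).card = k + S.card := by
  rw [arcWithTail, card_union_of_disjoint, card_arc s hk, card_image_of_injective _
    (arcTail_injective s k)]
  refine disjoint_right.2 fun x hx => ?_
  obtain ⟨j, -, rfl⟩ := mem_image.1 hx
  exact arcTail_notMem_arc s k j

theorem arcTail_sub_one (s : Fin n) (k : ℕ) (j : Fin (n - k - 2)) :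
    arcTail s k j - 1 = s + ((k + j : ℕ) : Fin n) := by
  rw [arcTail]; push_cast; ring

theorem arcTail_add_one (s : Fin n) (k : ℕ) (j : Fin (n - k - 2)) :
    arcTail s k j + 1 = s + ((k + 2 + j : ℕ) : Fin n) := by
  rw [arcTail]; push_cast; ring

theorem IsMaximalRun.exists_isDomSet_pathGraph {s : Fin n} {k : ℕ}
    (hD : IsDomSet (cycleGraph n) D) (hrun : IsMaximalRun D s k) (hk : k + 2 ≤ n) :
    ∃ S : Finset (Fin (n - k - 2)), IsDomSet (pathGraph (n - k - 2)) S ∧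
      arcWithTail s k S = D := by
  classical
  obtain ⟨hstart, hmem, hend⟩ := hrun
  rw [isDomSet_cycleGraph_iff (by omega)] at hD
  have hlast : s + ((n - 1 : ℕ) : Fin n) = s - 1 := by
    rw [Fin.natCast_sub_one_eq_neg_one, sub_eq_add_neg]
  refine ⟨({j | arcTail s k j ∈ D} : Finset _), fun j hj => ?_, ?_⟩
  · rcases hD _ (by simpa using hj) with h | h
    · rw [arcTail_sub_one] at h
      have hj0 : (j : ℕ) ≠ 0 := by
        rintro h0
        exact hend (by simpa [h0] using h)
      refine ⟨⟨j - 1, by omega⟩, ?_, by rw [pathGraph_adj]; simp; omega⟩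
      rw [mem_filter_univ, arcTail]
      convert h using 3
      dsimp only
      omega
    · rw [arcTail_add_one] at h
      have hj1 : (j : ℕ) + 1 ≠ n - k - 2 := by
        rintro h1
        exact hstart (by rw [← hlast]; convert h using 3; omega)
      refine ⟨⟨j + 1, by omega⟩, ?_, by rw [pathGraph_adj]; simp⟩
      rw [mem_filter_univ, arcTail]
      convert h using 3
      dsimp only
      omega
  · ext x
    obtain ⟨t, ht, rfl⟩ : ∃ t < n, x = s + (t : Fin n) := ⟨(x - s).val, (x - s).isLt, by simp⟩
    simp only [arcWithTail, mem_union, mem_image, mem_filter_univ]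
    refine ⟨?_, fun hx => ?_⟩
    · rintro (hx | ⟨j, hj, hjx⟩)
      · exact arc_subset hmem hx
      · exact hjx ▸ hj
    rcases lt_or_ge t k with htk | htk
    · exact Or.inl ((add_natCast_mem_arc_iff ht).2 htk)
    have hkt : k ≠ t := by rintro rfl; exact hend hx
    have htn : t ≠ n - 1 := by rintro rfl; exact hstart (hlast ▸ hx)
    have htail : arcTail s k ⟨t - k - 1, by omega⟩ = s + (t : Fin n) := by
      rw [arcTail]; congr 2; dsimp only; omega
    exact Or.inr ⟨_, htail ▸ hx, htail⟩

theorem IsAccDomSet.exists_arcWithTail_eq (hn : 2 ≤ n) (hD : IsAccDomSet (cycleGraph n) D)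
    (hcard : 2 * D.card ≤ n) :
    ∃ k ∈ Icc 3 (D.card - 1), ∃ s, ∃ S : Finset (Fin (n - k - 2)),
      IsDomSet (pathGraph (n - k - 2)) S ∧ S.card = D.card - k ∧ arcWithTail s k S = D := by
  obtain ⟨v, hv⟩ := hD.exists_three_consecutive hn hcard
  obtain ⟨w, -, hw⟩ := exists_mem_notMem_of_card_lt_card (s := D) (t := univ)
    (by rw [card_univ, Fintype.card_fin]; omega)
  obtain ⟨s, k, hk3, hrun⟩ := exists_isMaximalRun hv hw
  have hkD := hrun.lt_card hD.1 hk3 hcard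
  obtain ⟨S, hS, hSD⟩ := hrun.exists_isDomSet_pathGraph hD.1 (by omega)
  have hScard := card_arcWithTail s (k := k) (by omega) S
  rw [hSD] at hScard
  exact ⟨k, mem_Icc.2 ⟨hk3, by omega⟩, s, S, hS, by omega, hSD⟩

end Cycle

theorem cycle_numAccDomSets_upper_general (n i : ℕ) (hn : 6 ≤ n) (h2 : i ≤ n / 2) :
    numAccDomSets (SimpleGraph.cycleGraph n) i ≤
      ∑ k ∈ Finset.Icc 3 (i - 1),
        n * numDomSets (SimpleGraph.pathGraph (n - k - 2)) (i - k) := by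
  classical
  have : NeZero n := ⟨by omega⟩
  rw [numAccDomSets_eq_card]
  calc #{D : Finset (Fin n) | IsAccDomSet (cycleGraph n) D ∧ D.card = i}
      ≤ #((Icc 3 (i - 1)).biUnion fun k => univ.biUnion fun s =>
          ({S | IsDomSet (pathGraph (n - k - 2)) S ∧ S.card = i - k} : Finset _).image
            (arcWithTail s k)) := by
        refine card_le_card fun D hD => ?_
        obtain ⟨hacc, rfl⟩ := (mem_filter_univ _).1 hD
        obtain ⟨k, hk, s, S, hS, hScard, rfl⟩ := hacc.exists_arcWithTail_eq (by omega) (by omega)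
        simp only [mem_biUnion, mem_univ, true_and, mem_image, mem_filter_univ]
        exact ⟨k, hk, s, S, ⟨hS, hScard⟩, rfl⟩
    _ ≤ _ := card_biUnion_le
    _ ≤ _ := sum_le_sum fun k _ => ?_
  rw [numDomSets_eq_card]
  refine (card_biUnion_le_card_mul univ _ _ fun s _ => card_image_le).trans_eq ?_
  rw [card_univ, Fintype.card_fin]

/-- Upper bound for the number of accurate dominating sets of the cycle `C_n` of
cardinality `i`, for `⌊n/3⌋ + 2 ≤ i ≤ ⌊n/2⌋`. -/
theorem cycle_numAccDomSets_upper (n i : ℕ) (hn : 6 ≤ n)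
    (h1 : n / 3 + 2 ≤ i) (h2 : i ≤ n / 2) :
    numAccDomSets (SimpleGraph.cycleGraph n) i ≤
      ∑ k ∈ Finset.Icc 3 (i - 1),
        n * numDomSets (SimpleGraph.pathGraph (n - k - 2)) (i - k) :=
  cycle_numAccDomSets_upper_general n i hn h2
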